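/- If λ is an additive character of Z/nZ of order n, then G(SL_r(Z/nZ), λ) = ∑_{X ∈ SL_r(Z/nZ)} λ(tr X) equals n^{r(r-1)/2} · K_r(Z/nZ, λ), where K_r(Z/nZ, λ) = ∑_{x_1 ··· x_r = 1, x_i ∈ Z/nZ} λ(x_1 + ··· + x_r) is the hyper-Kloosterman sum. -/

import Mathlib

/-!
Right multiplication by the unipotent block matrix `shear W = [[1, 0], [W, 1]]` preserves the
determinant and shifts the trace by `tr (B W)`, where `B` is the upper right block. Averaging over
`W`, and using that `W ↦ ψ (tr (B W))` is a nontrivial character unless `B = 0` (primitivity of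
`ψ`), only block lower triangular matrices survive in the Gauss sum. Splitting off one index at a
time, the free lower left block contributes `|R| ^ (k - 1)` at size `k` and the determinant
becomes a product of diagonal entries; in total this gives `|R| ^ (r choose 2)` times the
hyper-Kloosterman sum.
-/

open scoped BigOperators

/-- The additive character `x ↦ exp(2πi a x / n)`, evaluated on the
natural representative `v` of a residue class. -/
noncomputable def addChar (n : ℕ) (a : ℤ) (v : ℕ) : ℂ :=
  Complex.exp (2 * Real.pi * Complex.I * a * v / n)

open Finset Matrix

namespace Matrix

variable {ι κ R : Type*} [Fintype ι] [Fintype κ]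

theorem trace_fromBlocks [AddCommMonoid R] (A : Matrix ι ι R) (B : Matrix ι κ R)
    (C : Matrix κ ι R) (D : Matrix κ κ R) :
    (fromBlocks A B C D).trace = A.trace + D.trace := by
  simp [trace, Fintype.sum_sum_type]

theorem sum_det_trace_congr {M : Type*} [CommRing R] [Fintype R] [AddCommMonoid M]
    [DecidableEq ι] [DecidableEq κ] (e : ι ≃ κ) (F : R → R → M) :
    ∑ X : Matrix ι ι R, F X.det X.trace = ∑ X : Matrix κ κ R, F X.det X.trace :=
  Fintype.sum_equiv (reindex e e) _ _ fun X => by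
    rw [det_reindex_self, trace, trace, ← e.symm.sum_comp]; rfl

variable [DecidableEq ι] [DecidableEq κ] [CommRing R]

def shear (W : Matrix κ ι R) : Matrix (ι ⊕ κ) (ι ⊕ κ) R := fromBlocks 1 0 W 1

theorem det_shear (W : Matrix κ ι R) : (shear W).det = 1 := by
  simp [shear]

theorem trace_mul_shear (X : Matrix (ι ⊕ κ) (ι ⊕ κ) R) (W : Matrix κ ι R) :
    (X * shear W).trace = X.trace + (X.toBlocks₁₂ * W).trace := by
  rw [← fromBlocks_toBlocks X]
  simp only [shear, fromBlocks_multiply, trace_fromBlocks, Matrix.mul_one, Matrix.mul_zero,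
    toBlocks_fromBlocks₁₂, trace_add, trace_zero]
  abel

def toBlocksEquiv : Matrix (ι ⊕ κ) (ι ⊕ κ) R ≃
    (Matrix ι ι R × Matrix ι κ R) × (Matrix κ ι R × Matrix κ κ R) where
  toFun X := ((X.toBlocks₁₁, X.toBlocks₁₂), (X.toBlocks₂₁, X.toBlocks₂₂))
  invFun B := fromBlocks B.1.1 B.1.2 B.2.1 B.2.2
  left_inv X := fromBlocks_toBlocks X
  right_inv B := by simp

end Matrix

theorem sum_prod_sum_congr {ι κ R M : Type*} [Fintype ι] [Fintype κ] [DecidableEq ι]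
    [DecidableEq κ] [CommSemiring R] [Fintype R] [AddCommMonoid M] (e : ι ≃ κ) (F : R → R → M) :
    ∑ y : ι → R, F (∏ i, y i) (∑ i, y i) = ∑ y : κ → R, F (∏ i, y i) (∑ i, y i) :=
  Fintype.sum_equiv (e.arrowCongr (.refl R)) _ _ fun y => by
    simp [← e.symm.sum_comp, ← e.symm.prod_comp]

namespace AddChar

variable {R M : Type*} [CommRing R]

theorem IsPrimitive.mulShift_of_isUnit [CommMonoid M] {ψ : AddChar R M} (hψ : ψ.IsPrimitive)
    {u : R} (hu : IsUnit u) : (ψ.mulShift u).IsPrimitive := fun b hb => by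
  rw [mulShift_mulShift]
  exact hψ (by rwa [Ne, hu.mul_right_eq_zero])

variable [CommRing M] [Fintype R] {ψ : AddChar R M}
variable {ι κ : Type*} [Fintype ι] [Fintype κ] [DecidableEq ι] [DecidableEq κ]

theorem sum_det_trace_mul_shear (g : R → M) (W : Matrix κ ι R) :
    ∑ X : Matrix (ι ⊕ κ) (ι ⊕ κ) R, g X.det * ψ (X * shear W).trace =
      ∑ X : Matrix (ι ⊕ κ) (ι ⊕ κ) R, g X.det * ψ X.trace := by
  have hu : IsUnit (shear W) := (isUnit_iff_isUnit_det _).2 (by simp [det_shear])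
  exact Fintype.sum_bijective (· * shear W) (Units.mulRight_bijective hu.unit) _ _
    fun X => by simp [det_mul, det_shear]

theorem sum_prod_sum_sum_unit (α : Type*) [Fintype α] [DecidableEq α] (g : R → M) :
    ∑ y : α ⊕ Unit → R, g (∏ i, y i) * ψ (∑ i, y i) =
      ∑ t : R, ψ t * ∑ z : α → R, g ((∏ i, z i) * t) * ψ (∑ i, z i) := by
  rw [← (Equiv.sumArrowEquivProdArrow α Unit R).symm.sum_comp, Fintype.sum_prod_type]
  simp only [Fintype.prod_sum_type, Fintype.sum_sum_type, mul_sum]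
  conv_rhs => rw [sum_comm]
  refine sum_congr rfl fun z _ =>
    Fintype.sum_equiv (Equiv.funUnique Unit R) _ _ fun u => ?_
  simp [map_add_eq_mul]
  ring

variable [DecidableEq R] [IsDomain M]

theorem sum_trace_mul_eq_ite (hψ : ψ.IsPrimitive) (B : Matrix ι κ R) :
    ∑ W : Matrix κ ι R, ψ (B * W).trace =
      if B = 0 then (Fintype.card (Matrix κ ι R) : M) else 0 := by
  let χ : AddChar (Matrix κ ι R) M :=
    ψ.compAddMonoidHom ((traceAddMonoidHom ι R).comp B.addMonoidHomMulLeft)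
  have hχ : χ = 0 ↔ B = 0 := by
    refine ⟨fun h => ?_, fun h => by ext W; simp [χ, h]⟩
    ext i k
    by_contra hB
    obtain ⟨t, ht⟩ := ne_one_iff.1 (hψ hB)
    apply ht
    simpa [χ, trace_mul_single, mul_comm] using DFunLike.congr_fun h (single k i t)
  classical
  exact χ.sum_eq_ite.trans (if_congr hχ rfl rfl)

variable [CharZero M]

theorem sum_det_trace_eq_sum_toBlocks₁₂_eq_zero (hψ : ψ.IsPrimitive) (g : R → M) :
    ∑ X : Matrix (ι ⊕ κ) (ι ⊕ κ) R, g X.det * ψ X.trace =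
      ∑ X : Matrix (ι ⊕ κ) (ι ⊕ κ) R,
        if X.toBlocks₁₂ = 0 then g X.det * ψ X.trace else 0 := by
  have hcard : (Fintype.card (Matrix κ ι R) : M) ≠ 0 := Nat.cast_ne_zero.2 Fintype.card_ne_zero
  apply mul_left_cancel₀ hcard
  calc (Fintype.card (Matrix κ ι R) : M) *
        ∑ X : Matrix (ι ⊕ κ) (ι ⊕ κ) R, g X.det * ψ X.trace
      = ∑ W : Matrix κ ι R, ∑ X : Matrix (ι ⊕ κ) (ι ⊕ κ) R,
          g X.det * ψ (X * shear W).trace := by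
        simp [sum_det_trace_mul_shear]
    _ = ∑ X : Matrix (ι ⊕ κ) (ι ⊕ κ) R,
          g X.det * ψ X.trace * ∑ W : Matrix κ ι R, ψ (X.toBlocks₁₂ * W).trace := by
        rw [sum_comm]
        simp [trace_mul_shear, map_add_eq_mul, mul_sum, mul_assoc]
    _ = _ := by
        simp only [sum_trace_mul_eq_ite hψ, mul_sum]
        congr 1 with X
        split_ifs <;> ring

theorem sum_det_trace_eq_sum_fromBlocks (hψ : ψ.IsPrimitive) (g : R → M) :
    ∑ X : Matrix (ι ⊕ κ) (ι ⊕ κ) R, g X.det * ψ X.trace =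
      Fintype.card (Matrix κ ι R) * ∑ A : Matrix ι ι R, ∑ D : Matrix κ κ R,
        g (A.det * D.det) * (ψ A.trace * ψ D.trace) := by
  rw [sum_det_trace_eq_sum_toBlocks₁₂_eq_zero hψ, ← toBlocksEquiv.symm.sum_comp]
  simp [toBlocksEquiv, Fintype.sum_prod_type, det_fromBlocks_zero₁₂, trace_fromBlocks,
    map_add_eq_mul, mul_sum]

theorem sum_det_trace_sum_unit (hψ : ψ.IsPrimitive) (α : Type*) [Fintype α] [DecidableEq α]
    (g : R → M) :
    ∑ X : Matrix (α ⊕ Unit) (α ⊕ Unit) R, g X.det * ψ X.trace =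
      (Fintype.card R : M) ^ Fintype.card α *
        ∑ t : R, ψ t * ∑ A : Matrix α α R, g (A.det * t) * ψ A.trace := by
  have hcard : Fintype.card (Matrix Unit α R) = Fintype.card R ^ Fintype.card α := by
    rw [Fintype.card_eq_nat_card]; simp [Matrix]
  rw [sum_det_trace_eq_sum_fromBlocks hψ, hcard, sum_comm, Nat.cast_pow]
  congr 1
  refine Fintype.sum_equiv ((Equiv.funUnique Unit _).trans (Equiv.funUnique Unit R)) _ _
    fun D => ?_
  simp [trace, Matrix.diag, det_unique (D : Matrix Unit Unit R), mul_sum, mul_comm,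
    mul_left_comm]

theorem sum_det_trace_eq_card_pow_mul_sum (hψ : ψ.IsPrimitive) (ι : Type*) [Fintype ι]
    [DecidableEq ι] (g : R → M) :
    ∑ X : Matrix ι ι R, g X.det * ψ X.trace =
      (Fintype.card R : M) ^ (Fintype.card ι).choose 2 *
        ∑ y : ι → R, g (∏ i, y i) * ψ (∑ i, y i) := by
  induction h : Fintype.card ι generalizing ι g with
  | zero =>
    have : IsEmpty ι := Fintype.card_eq_zero_iff.1 h
    have : Unique (Matrix ι ι R) := inferInstanceAs (Unique (ι → ι → R))
    simp [trace]
  | succ r ih =>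
    obtain ⟨i₀⟩ : Nonempty ι := Fintype.card_pos_iff.1 (by omega)
    let α := {i // i ≠ i₀}
    have hα : Fintype.card α = r := by simp [α, Fintype.card_subtype_compl, h]
    let e : α ⊕ Unit ≃ ι := (Equiv.optionEquivSumPUnit α).symm.trans (Equiv.optionSubtypeNe i₀)
    calc ∑ X : Matrix ι ι R, g X.det * ψ X.trace
        = ∑ X : Matrix (α ⊕ Unit) (α ⊕ Unit) R, g X.det * ψ X.trace :=
          (sum_det_trace_congr e fun d t => g d * ψ t).symm
      _ = Fintype.card R ^ r * ∑ t : R, ψ t *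
            (Fintype.card R ^ r.choose 2 * ∑ z : α → R, g ((∏ i, z i) * t) * ψ (∑ i, z i)) := by
          rw [sum_det_trace_sum_unit hψ, hα]
          congr 1
          refine sum_congr rfl fun t _ => ?_
          rw [ih α (fun c => g (c * t)) hα]
      _ = Fintype.card R ^ (r + 1).choose 2 *
            ∑ y : α ⊕ Unit → R, g (∏ i, y i) * ψ (∑ i, y i) := by
          rw [sum_prod_sum_sum_unit, Nat.choose_succ_succ, Nat.choose_one_right, pow_add,
            mul_assoc]
          simp only [mul_sum, mul_left_comm]
      _ = _ := congrArg _ (sum_prod_sum_congr e fun p s => g p * ψ s)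

end AddChar

theorem ZMod.isUnit_intCast_of_gcd_eq_one {n : ℕ} {a : ℤ} (ha : Int.gcd a n = 1) :
    IsUnit (a : ZMod n) :=
  (ZMod.coe_int_isUnit_iff_isCoprime a n).2 (by rwa [Int.isCoprime_iff_gcd_eq_one, Int.gcd_comm])

theorem addChar_val_eq_mulShift_stdAddChar (n : ℕ) [NeZero n] (a : ℤ) (z : ZMod n) :
    addChar n a z.val = ZMod.stdAddChar.mulShift (a : ZMod n) z := by
  have h : (a : ZMod n) * z = ((a * z.val : ℤ) : ZMod n) := by push_cast; simp
  rw [AddChar.mulShift_apply, h, ZMod.stdAddChar_coe, addChar]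
  push_cast
  ring_nf

theorem gauss_sum_SL_primitive_general (n r : ℕ) [NeZero n] (a : ℤ)
    (ha : Int.gcd a n = 1) :
    (∑ X : Matrix.SpecialLinearGroup (Fin r) (ZMod n),
        addChar n a (X.val.trace).val) =
      (n : ℂ) ^ (r * (r - 1) / 2) *
        ∑ x ∈ Finset.univ.filter (fun x : Fin r → ZMod n => ∏ i, x i = 1),
          addChar n a (∑ i, x i).val := by
  have hψ := (ZMod.isPrimitive_stdAddChar n).mulShift_of_isUnit
    (ZMod.isUnit_intCast_of_gcd_eq_one ha)
  have key := AddChar.sum_det_trace_eq_card_pow_mul_sum hψ (Fin r)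
    (fun d => if d = 1 then 1 else 0)
  simp only [ite_mul, one_mul, zero_mul, ← Finset.sum_filter, ZMod.card, Fintype.card_fin,
    Nat.choose_two_right] at key
  simp only [addChar_val_eq_mulShift_stdAddChar]
  rw [← key, Finset.sum_subtype _ (fun X => Finset.mem_filter_univ X)]
  rfl

/-- If `λ(x) = exp(2πi a x/n)` has order `n` (i.e. `gcd(a,n)=1`), then
`G(SL_r(ℤ/nℤ), λ) = n^{r(r-1)/2} · K_r(ℤ/nℤ, λ)`, where
`K_r(ℤ/nℤ, λ) = ∑_{x₁⋯x_r = 1} λ(x₁ + ⋯ + x_r)` is the hyper-Kloosterman sum. -/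
theorem gauss_sum_SL_primitive (n r : ℕ) [NeZero n] (hr : 1 ≤ r) (a : ℤ)
    (ha : Int.gcd a n = 1) :
    (∑ X : Matrix.SpecialLinearGroup (Fin r) (ZMod n),
        addChar n a (X.val.trace).val) =
      (n : ℂ) ^ (r * (r - 1) / 2) *
        ∑ x ∈ Finset.univ.filter (fun x : Fin r → ZMod n => ∏ i, x i = 1),
          addChar n a (∑ i, x i).val :=
  gauss_sum_SL_primitive_general n r a ha
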